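/- Assume $(\varrho_n)_{n \in \mathbb{Z}}$ is summable. For all real constants $A, B \in \mathbb{R}$, the function $u : G_k \to \mathbb{R}$ defined by $u(x) = A \, \Sigma^-(\phi(x)) + B \, \Sigma^+(\phi(x))$ is $H_{ij}$-periodic and $p$-harmonic: $\Delta_p u(x) = 0$ for all $x \in G_k$. -/

import Mathlib

open scoped BigOperators

noncomputable section

/-- The group representation `G_k` of the Cayley tree of order `k`:
the free product of `k+1` copies of the cyclic group of order two. -/
abbrev G (k : ℕ) : Type := Monoid.CoprodI (fun _ : Fin (k + 1) => Multiplicative (ZMod 2))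

/-- The generators `a_0, ..., a_k` of `G_k`. -/
def gen (k : ℕ) (s : Fin (k + 1)) : G k :=
  Monoid.CoprodI.of (i := s) (Multiplicative.ofAdd (1 : ZMod 2))

/-- `φ_p(t) = |t|^(p-2) t` (real powers). -/
noncomputable def phiP (p t : ℝ) : ℝ := |t| ^ (p - 2) * t

/-- The discrete `p`-Laplacian on the Cayley tree with resistances `r`:
`Δ_p u (x) = ∑_{s=0}^{k} φ_p ((u (x a_s) - u x) / r (x, x a_s))`. -/
noncomputable def pLap (k : ℕ) (p : ℝ) (r : G k × G k → ℝ) (u : G k → ℝ) (x : G k) : ℝ :=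
  ∑ s : Fin (k + 1), phiP p ((u (x * gen k s) - u x) / r (x, x * gen k s))

/-- A function `u : G_k → ℝ` is `H`-periodic if `u (y x) = u x` for all `y ∈ H`, `x ∈ G_k`. -/
def IsPeriodic (k : ℕ) (H : Subgroup (G k)) (u : G k → ℝ) : Prop :=
  ∀ y ∈ H, ∀ x : G k, u (y * x) = u x

/-- The coset index `φ(x) = ρ(x)(0)` associated to a permutation action `ρ` of `G_k` on `ℤ`. -/
def cosetIdx {k : ℕ} (ρ : G k →* Equiv.Perm ℤ) (x : G k) : ℤ := ρ x 0

/-! Every `ρ x` is a product of the reflections `n ↦ 1 - n`, `n ↦ -1 - n` and the identity, hence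
an isometry of `ℤ`. So of the neighbours `x a_i`, `x a_j` one has index `φ(x) + 1` and the other
`φ(x) - 1`, while all other neighbours keep the index `φ(x)`. The potential
`U(n) = A Σ⁻(n) + B Σ⁺(n)` satisfies `U(n+1) - U(n) = (A - B) ϱ_n`, so along each edge between the
levels `n` and `n + 1` the difference quotient of `u` is `±(A - B)`; the two nonzero terms of
`Δ_p u(x)` cancel since `φ_p` is odd. Periodicity holds because `ρ ∘ f = ρ`. -/

section TailSums

variable {α β : Type*} [AddCommGroup α] [UniformSpace α] [IsUniformAddGroup α] [CompleteSpace α]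
  [T2Space α]

theorem Summable.tsum_union_singleton {f : β → α} (hf : Summable f) {s : Set β} {b : β}
    (hb : b ∉ s) : ∑' x : ↑(s ∪ {b}), f x = ∑' x : s, f x + f b := by
  rw [hf.subtype _ |>.tsum_union_disjoint (Set.disjoint_singleton_right.2 hb) (hf.subtype _),
    tsum_singleton]

theorem tsum_subtype_lt_add_one {f : ℤ → α} (hf : Summable f) (n : ℤ) :
    ∑' m : {m : ℤ // m < n + 1}, f m = ∑' m : {m : ℤ // m < n}, f m + f n := by
  have hs : {m : ℤ | m < n + 1} = {m | m < n} ∪ {n} := by ext; simp; omega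
  exact (tsum_congr_set_coe f hs).trans (hf.tsum_union_singleton (lt_irrefl n))

theorem tsum_subtype_le_eq_add {f : ℤ → α} (hf : Summable f) (n : ℤ) :
    ∑' m : {m : ℤ // n ≤ m}, f m = ∑' m : {m : ℤ // n + 1 ≤ m}, f m + f n := by
  have hs : {m : ℤ | n ≤ m} = {m | n + 1 ≤ m} ∪ {n} := by ext; simp; omega
  exact (tsum_congr_set_coe f hs).trans (hf.tsum_union_singleton (by simp))

end TailSums

theorem phiP_zero (p : ℝ) : phiP p 0 = 0 := by simp [phiP]

theorem phiP_neg (p t : ℝ) : phiP p (-t) = -phiP p t := by simp [phiP]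

theorem Int.isometry_apply_add_one_sub_one {σ : ℤ → ℤ} (hσ : Isometry σ) (n : ℤ) :
    σ (n + 1) = σ n + 1 ∧ σ (n - 1) = σ n - 1 ∨ σ (n + 1) = σ n - 1 ∧ σ (n - 1) = σ n + 1 := by
  have h : ∀ a b, |σ a - σ b| = |a - b| := fun a b => by
    exact_mod_cast (Int.dist_eq _ _).symm.trans ((hσ.dist_eq a b).trans (Int.dist_eq a b))
  have h₁ := h (n + 1) n
  have h₂ := h (n - 1) n
  have h₃ := h (n + 1) (n - 1)
  norm_num [abs_eq] at h₁ h₂ h₃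
  omega

theorem mclosure_range_gen (k : ℕ) : Submonoid.closure (Set.range (gen k)) = ⊤ := by
  refine eq_top_mono (Submonoid.closure_le.2 (Set.iUnion_subset fun s => ?_))
    Monoid.CoprodI.mclosure_iUnion_range_of
  rintro _ ⟨m, rfl⟩
  obtain rfl | rfl : m = 1 ∨ m = Multiplicative.ofAdd 1 := by revert m; decide
  · simp
  · exact Submonoid.subset_closure ⟨s, rfl⟩

theorem ext_hom_gen {k : ℕ} {M : Type*} [Monoid M] {φ ψ : G k →* M}
    (h : ∀ s, φ (gen k s) = ψ (gen k s)) : φ = ψ :=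
  MonoidHom.eq_of_eqOn_denseM (mclosure_range_gen k) (by rintro _ ⟨s, rfl⟩; exact h s)

theorem isometry_of_isometry_gen {k : ℕ} {X : Type*} [PseudoEMetricSpace X]
    (ρ : G k →* Equiv.Perm X) (h : ∀ s, Isometry (ρ (gen k s))) (x : G k) : Isometry (ρ x) := by
  induction x using Submonoid.induction_of_closure_eq_top_left (mclosure_range_gen k) with
  | one => simpa using isometry_id
  | mul_left _ hx _ hy =>
    obtain ⟨s, rfl⟩ := hx
    simpa using (h s).comp hy

theorem cosetIdx_mul {k : ℕ} (ρ : G k →* Equiv.Perm ℤ) (x y : G k) :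
    cosetIdx ρ (x * y) = ρ x (cosetIdx ρ y) := by
  simp [cosetIdx]

theorem isPeriodic_comp_cosetIdx {k : ℕ} {ρ : G k →* Equiv.Perm ℤ} {H : Subgroup (G k)}
    (hH : H ≤ ρ.ker) (U : ℤ → ℝ) : IsPeriodic k H (fun x => U (cosetIdx ρ x)) := by
  intro y hy x
  show U (cosetIdx ρ (y * x)) = U (cosetIdx ρ x)
  rw [cosetIdx_mul, MonoidHom.mem_ker.1 (hH hy), Equiv.Perm.one_apply]

section Flux

variable {V : Type*} {φ : V → ℤ} {r : V × V → ℝ} {ϱ : ℤ → ℝ} {U : ℤ → ℝ} {c : ℝ}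

theorem sub_div_resistance_eq_of_succ (hrϱ : ∀ x y, φ y = φ x + 1 → r (x, y) = ϱ (φ x))
    (hϱ : ∀ n, ϱ n ≠ 0) (hU : ∀ n, U (n + 1) - U n = c * ϱ n) {x y : V} (hxy : φ y = φ x + 1) :
    (U (φ y) - U (φ x)) / r (x, y) = c := by
  rw [hrϱ x y hxy, hxy, hU, mul_div_cancel_right₀ _ (hϱ _)]

theorem sub_div_resistance_eq_neg_of_pred (hr_symm : ∀ x y, r (x, y) = r (y, x))
    (hrϱ : ∀ x y, φ y = φ x + 1 → r (x, y) = ϱ (φ x)) (hϱ : ∀ n, ϱ n ≠ 0)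
    (hU : ∀ n, U (n + 1) - U n = c * ϱ n) {x y : V} (hxy : φ x = φ y + 1) :
    (U (φ y) - U (φ x)) / r (x, y) = -c := by
  rw [hr_symm, ← neg_sub, neg_div, sub_div_resistance_eq_of_succ hrϱ hϱ hU hxy]

end Flux

def tailPotential (ϱ : ℤ → ℝ) (A B : ℝ) (n : ℤ) : ℝ :=
  A * (∑' s : {m : ℤ // m < n}, ϱ s) + B * (∑' s : {m : ℤ // n ≤ m}, ϱ s)

theorem tailPotential_succ_sub {ϱ : ℤ → ℝ} (hϱ : Summable ϱ) (A B : ℝ) (n : ℤ) :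
    tailPotential ϱ A B (n + 1) - tailPotential ϱ A B n = (A - B) * ϱ n := by
  simp only [tailPotential, tsum_subtype_lt_add_one hϱ, tsum_subtype_le_eq_add hϱ n]
  ring

theorem pLap_comp_cosetIdx_eq_zero {k : ℕ} (p : ℝ) {r : G k × G k → ℝ}
    (hr_symm : ∀ x y, r (x, y) = r (y, x)) {i j : Fin (k + 1)} (hij : i ≠ j)
    {ρ : G k →* Equiv.Perm ℤ} (hρ : ∀ x, Isometry (ρ x))
    (hρi : ρ (gen k i) 0 = 1) (hρj : ρ (gen k j) 0 = -1)
    (hρs : ∀ s, s ≠ i → s ≠ j → ρ (gen k s) = 1) {ϱ : ℤ → ℝ} (hϱ : ∀ n, ϱ n ≠ 0)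
    (hrϱ : ∀ x y, cosetIdx ρ y = cosetIdx ρ x + 1 → r (x, y) = ϱ (cosetIdx ρ x))
    {U : ℤ → ℝ} {c : ℝ} (hU : ∀ n, U (n + 1) - U n = c * ϱ n) (x : G k) :
    pLap k p r (fun x => U (cosetIdx ρ x)) x = 0 := by
  have h_fixed : ∀ s, s ≠ i ∧ s ≠ j →
      phiP p ((U (cosetIdx ρ (x * gen k s)) - U (cosetIdx ρ x)) / r (x, x * gen k s)) = 0 := by
    rintro s ⟨hi, hj⟩
    have hs : cosetIdx ρ (x * gen k s) = cosetIdx ρ x := by simp [cosetIdx, hρs s hi hj]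
    rw [hs, sub_self, zero_div, phiP_zero]
  have hxi : cosetIdx ρ (x * gen k i) = ρ x (0 + 1) := by
    rw [cosetIdx_mul, cosetIdx, hρi, zero_add]
  have hxj : cosetIdx ρ (x * gen k j) = ρ x (0 - 1) := by
    rw [cosetIdx_mul, cosetIdx, hρj, zero_sub]
  rw [pLap, Fintype.sum_eq_add i j hij h_fixed]
  rcases Int.isometry_apply_add_one_sub_one (hρ x) 0 with ⟨hi, hj⟩ | ⟨hi, hj⟩
  · rw [sub_div_resistance_eq_of_succ hrϱ hϱ hU (hxi.trans hi),
      sub_div_resistance_eq_neg_of_pred hr_symm hrϱ hϱ hU (by rw [hxj, hj]; simp [cosetIdx]),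
      phiP_neg, add_neg_cancel]
  · rw [sub_div_resistance_eq_neg_of_pred hr_symm hrϱ hϱ hU (by rw [hxi, hi]; simp [cosetIdx]),
      sub_div_resistance_eq_of_succ hrϱ hϱ hU (hxj.trans hj), phiP_neg, neg_add_cancel]

theorem stmt15_general (k : ℕ) (p : ℝ)
    (r : G k × G k → ℝ) (hr_symm : ∀ x y : G k, r (x, y) = r (y, x))
    (i j : Fin (k + 1)) (hij : i ≠ j)
    (ρ : G k →* Equiv.Perm ℤ)
    (hρi : ∀ n : ℤ, ρ (gen k i) n = 1 - n)
    (hρj : ∀ n : ℤ, ρ (gen k j) n = -1 - n)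
    (hρs : ∀ s : Fin (k + 1), s ≠ i → s ≠ j → ρ (gen k s) = 1)
    (f : G k →* G k)
    (hfi : f (gen k i) = gen k i) (hfj : f (gen k j) = gen k j)
    (hfs : ∀ s : Fin (k + 1), s ≠ i → s ≠ j → f (gen k s) = 1)
    (ϱ : ℤ → ℝ) (hϱ_pos : ∀ n : ℤ, 0 < ϱ n)
    (hrϱ : ∀ x y : G k, cosetIdx ρ y = cosetIdx ρ x + 1 → r (x, y) = ϱ (cosetIdx ρ x))
    (hϱ_sum : Summable ϱ)
    (A B : ℝ) :
    IsPeriodic k f.ker (fun x => A * (∑' s : {m : ℤ // m < cosetIdx ρ x}, ϱ s) + B * (∑' s : {m : ℤ // cosetIdx ρ x ≤ m}, ϱ s)) ∧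
      ∀ x : G k, pLap k p r (fun x => A * (∑' s : {m : ℤ // m < cosetIdx ρ x}, ϱ s) + B * (∑' s : {m : ℤ // cosetIdx ρ x ≤ m}, ϱ s)) x = 0 := by
  have hρf : ρ.comp f = ρ := ext_hom_gen fun s => by
    by_cases hi : s = i
    · subst hi; simp [hfi]
    by_cases hj : s = j
    · subst hj; simp [hfj]
    simp [hfs s hi hj, hρs s hi hj]
  have hker : f.ker ≤ ρ.ker := fun y hy => by
    rw [MonoidHom.mem_ker, ← hρf, MonoidHom.comp_apply, MonoidHom.mem_ker.1 hy, map_one]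
  have hρ_gen : ∀ s, Isometry (ρ (gen k s)) := fun s => by
    by_cases hi : s = i
    · subst hi; rw [show ⇑(ρ (gen k s)) = (1 - ·) from funext hρi]
      exact (IsometryEquiv.subLeft 1).isometry
    by_cases hj : s = j
    · subst hj; rw [show ⇑(ρ (gen k s)) = (-1 - ·) from funext hρj]
      exact (IsometryEquiv.subLeft (-1)).isometry
    simpa [hρs s hi hj] using isometry_id
  have periodic := isPeriodic_comp_cosetIdx hker (tailPotential ϱ A B)
  have harmonic := pLap_comp_cosetIdx_eq_zero p hr_symm hij (isometry_of_isometry_gen ρ hρ_gen)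
      (by simpa using hρi 0) (by simpa using hρj 0) hρs (fun n => (hϱ_pos n).ne')
      hrϱ (tailPotential_succ_sub hϱ_sum A B)
  exact ⟨periodic, harmonic⟩

theorem stmt15 (k : ℕ) (hk : 1 ≤ k) (p : ℝ) (hp1 : 1 < p)
    (r : G k × G k → ℝ) (hr_symm : ∀ x y : G k, r (x, y) = r (y, x)) (hr_pos : ∀ x y : G k, 0 < r (x, y))
    (i j : Fin (k + 1)) (hij : i ≠ j)
    (ρ : G k →* Equiv.Perm ℤ)
    (hρi : ∀ n : ℤ, ρ (gen k i) n = 1 - n)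
    (hρj : ∀ n : ℤ, ρ (gen k j) n = -1 - n)
    (hρs : ∀ s : Fin (k + 1), s ≠ i → s ≠ j → ρ (gen k s) = 1)
    (f : G k →* G k)
    (hfi : f (gen k i) = gen k i) (hfj : f (gen k j) = gen k j)
    (hfs : ∀ s : Fin (k + 1), s ≠ i → s ≠ j → f (gen k s) = 1)
    (ϱ : ℤ → ℝ) (hϱ_pos : ∀ n : ℤ, 0 < ϱ n)
    (hrϱ : ∀ x y : G k, cosetIdx ρ y = cosetIdx ρ x + 1 → r (x, y) = ϱ (cosetIdx ρ x))
    (hϱ_sum : Summable ϱ)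
    (A B : ℝ) :
    IsPeriodic k f.ker (fun x => A * (∑' s : {m : ℤ // m < cosetIdx ρ x}, ϱ s) + B * (∑' s : {m : ℤ // cosetIdx ρ x ≤ m}, ϱ s)) ∧
      ∀ x : G k, pLap k p r (fun x => A * (∑' s : {m : ℤ // m < cosetIdx ρ x}, ϱ s) + B * (∑' s : {m : ℤ // cosetIdx ρ x ≤ m}, ϱ s)) x = 0 :=
  stmt15_general k p r hr_symm i j hij ρ hρi hρj hρs f hfi hfj hfs ϱ hϱ_pos hrϱ hϱ_sum A B
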